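/- Let φ₁, φ₂, w : ℝ² → ℝ be smooth with compact support. Then |∫_{ℝ²} ( det(D²φ₁) − det(D²φ₂) ) w dx| ≤ ( ‖∇φ₁‖_{L⁴} + ‖∇φ₂‖_{L⁴} ) · ‖D²(φ₁ − φ₂)‖_{L²} · ‖∇w‖_{L⁴}, where |∇g| denotes the Euclidean norm of the gradient (g_{x₁}, g_{x₂}), |D²g| denotes the Frobenius norm of the Hessian matrix of g, and the L^p norms are taken of these pointwise norms. -/

import Mathlib

open MeasureTheory

/-- Partial derivative in the `i`-th coordinate direction of `f : ℝ² → ℝ`. -/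
noncomputable def pd (i : Fin 2) (f : EuclideanSpace ℝ (Fin 2) → ℝ) :
    EuclideanSpace ℝ (Fin 2) → ℝ :=
  fun x => fderiv ℝ f x (EuclideanSpace.single i 1)

/-- Hessian determinant of `f : ℝ² → ℝ`. -/
noncomputable def hessDet (f : EuclideanSpace ℝ (Fin 2) → ℝ) :
    EuclideanSpace ℝ (Fin 2) → ℝ :=
  fun x => pd 0 (pd 0 f) x * pd 1 (pd 1 f) x - (pd 1 (pd 0 f) x) ^ 2

/-- Euclidean norm of the gradient `(g_{x₁}, g_{x₂})`. -/
noncomputable def gradNorm (g : EuclideanSpace ℝ (Fin 2) → ℝ) :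
    EuclideanSpace ℝ (Fin 2) → ℝ :=
  fun x => Real.sqrt ((pd 0 g x) ^ 2 + (pd 1 g x) ^ 2)

/-- Frobenius norm of the Hessian matrix of `g`. -/
noncomputable def hessNorm (g : EuclideanSpace ℝ (Fin 2) → ℝ) :
    EuclideanSpace ℝ (Fin 2) → ℝ :=
  fun x => Real.sqrt ((pd 0 (pd 0 g) x) ^ 2 + (pd 1 (pd 0 g) x) ^ 2
    + (pd 0 (pd 1 g) x) ^ 2 + (pd 1 (pd 1 g) x) ^ 2)


open scoped ENNReal NNReal

abbrev E2 := EuclideanSpace ℝ (Fin 2)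

lemma pd_contDiff {f : E2 → ℝ} (hf : ContDiff ℝ (⊤ : ℕ∞) f) (i : Fin 2) : ContDiff ℝ (⊤ : ℕ∞) (pd i f) :=
  (hf.fderiv_right (by simp)).clm_apply contDiff_const

lemma pd_cont {f : E2 → ℝ} (hf : ContDiff ℝ (⊤ : ℕ∞) f) (i : Fin 2) : Continuous (pd i f) :=
  (pd_contDiff hf i).continuous

lemma pd_hcs {f : E2 → ℝ} (hf : HasCompactSupport f) (i : Fin 2) : HasCompactSupport (pd i f) :=
  hf.fderiv_apply ℝ _

lemma pd_add {a b : E2 → ℝ} (ha : Differentiable ℝ a) (hb : Differentiable ℝ b) (i : Fin 2) (x : E2) :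
    pd i (fun y => a y + b y) x = pd i a x + pd i b x := by
  simp [pd, fderiv_fun_add (ha x) (hb x)]

lemma pd_sub {a b : E2 → ℝ} (ha : Differentiable ℝ a) (hb : Differentiable ℝ b) (i : Fin 2) (x : E2) :
    pd i (fun y => a y - b y) x = pd i a x - pd i b x := by
  simp [pd, fderiv_fun_sub (ha x) (hb x)]

lemma pd_mul {a b : E2 → ℝ} (ha : Differentiable ℝ a) (hb : Differentiable ℝ b) (i : Fin 2) (x : E2) :
    pd i (fun y => a y * b y) x = pd i a x * b x + a x * pd i b x := by
  simp only [pd, fderiv_fun_mul (ha x) (hb x)]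
  simp [mul_comm]; ring

lemma pd_comm {f : E2 → ℝ} (hf : ContDiff ℝ (⊤ : ℕ∞) f) (i j : Fin 2) (x : E2) :
    pd i (pd j f) x = pd j (pd i f) x := by
  have hsymm := (hf.contDiffAt (x := x)).isSymmSndFDerivAt (by rw [minSmoothness_of_isRCLikeNormedField]; exact WithTop.coe_le_coe.mpr (le_top : (2 : ℕ∞) ≤ ⊤))
  have hd : Differentiable ℝ (fderiv ℝ f) :=
    (hf.fderiv_right (m := (⊤ : ℕ∞)) (by simp)).differentiable (by simp)
  have h : ∀ k l : Fin 2, pd k (pd l f) x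
      = fderiv ℝ (fderiv ℝ f) x (EuclideanSpace.single k 1) (EuclideanSpace.single l 1) := by
    intro k l
    have : pd l f = fun y => (fderiv ℝ f y) (EuclideanSpace.single l 1) := rfl
    rw [pd, this]
    rw [fderiv_clm_apply (hd x) (differentiableAt_const _)]
    simp
  rw [h i j, h j i, hsymm.eq]


lemma integral_pd_eq_zero {f : E2 → ℝ} (hf : ContDiff ℝ (⊤ : ℕ∞) f) (hc : HasCompactSupport f)
    (i : Fin 2) : ∫ x, pd i f x = 0 := by
  obtain ⟨C, hC⟩ := ContDiff.lipschitzWith_of_hasCompactSupport hc hf (by simp)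
  have h1 : LipschitzWith 0 (fun _ : E2 => (1:ℝ)) := LipschitzWith.const _
  have key := LipschitzWith.integral_lineDeriv_mul_eq (μ := (volume : Measure E2)) h1 hC hc
      (-(EuclideanSpace.single i 1))
  have hz : ∀ (v x : E2), lineDeriv ℝ (fun _ : E2 => (1:ℝ)) x v = 0 := by
    intro v x; simp [lineDeriv]
  simp only [hz, zero_mul, integral_zero, neg_neg, mul_one] at key
  have : ∀ x : E2, lineDeriv ℝ f x (EuclideanSpace.single i 1) = pd i f x := fun x =>
    ((hf.differentiable (by simp)) x).lineDeriv_eq_fderiv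
  rw [← integral_congr_ae (Filter.Eventually.of_forall this)]
  exact key.symm

lemma divergence_identity {u ψ w : E2 → ℝ} (hu : ContDiff ℝ (⊤ : ℕ∞) u) (hψ : ContDiff ℝ (⊤ : ℕ∞) ψ)
    (hw : ContDiff ℝ (⊤ : ℕ∞) w) (x : E2) :
    pd 0 (fun y => (pd 0 u y * pd 1 (pd 1 ψ) y - pd 1 u y * pd 1 (pd 0 ψ) y) * w y) x
      + pd 1 (fun y => (pd 1 u y * pd 0 (pd 0 ψ) y - pd 0 u y * pd 1 (pd 0 ψ) y) * w y) x
    = (pd 0 (pd 0 u) x * pd 1 (pd 1 ψ) x + pd 1 (pd 1 u) x * pd 0 (pd 0 ψ) x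
        - 2 * pd 1 (pd 0 u) x * pd 1 (pd 0 ψ) x) * w x
      + ((pd 0 u x * pd 1 (pd 1 ψ) x - pd 1 u x * pd 1 (pd 0 ψ) x) * pd 0 w x
         + (pd 1 u x * pd 0 (pd 0 ψ) x - pd 0 u x * pd 1 (pd 0 ψ) x) * pd 1 w x) := by
  have du : ∀ i, Differentiable ℝ (pd i u) := fun i => (pd_contDiff hu i).differentiable (by simp)
  have dψ2 : ∀ i j, Differentiable ℝ (pd i (pd j ψ)) := fun i j =>
    (pd_contDiff (pd_contDiff hψ j) i).differentiable (by simp)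
  have dw : Differentiable ℝ w := hw.differentiable (by simp)
  have dV₁ : Differentiable ℝ (fun y => pd 0 u y * pd 1 (pd 1 ψ) y - pd 1 u y * pd 1 (pd 0 ψ) y) :=
    ((du 0).mul (dψ2 1 1)).sub ((du 1).mul (dψ2 1 0))
  have dV₂ : Differentiable ℝ (fun y => pd 1 u y * pd 0 (pd 0 ψ) y - pd 0 u y * pd 1 (pd 0 ψ) y) :=
    ((du 1).mul (dψ2 0 0)).sub ((du 0).mul (dψ2 1 0))
  rw [pd_mul dV₁ dw, pd_mul dV₂ dw,
    pd_sub ((du 0).fun_mul (dψ2 1 1)) ((du 1).fun_mul (dψ2 1 0)),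
    pd_sub ((du 1).fun_mul (dψ2 0 0)) ((du 0).fun_mul (dψ2 1 0)),
    pd_mul (du 0) (dψ2 1 1), pd_mul (du 1) (dψ2 1 0),
    pd_mul (du 1) (dψ2 0 0), pd_mul (du 0) (dψ2 1 0)]
  have s1 : pd 0 (pd 1 (pd 1 ψ)) x = pd 1 (pd 1 (pd 0 ψ)) x := by
    rw [pd_comm (pd_contDiff hψ 1) 0 1 x]
    exact congrArg (fun g => pd 1 g x) (funext (pd_comm hψ 0 1))
  have s2 : pd 0 (pd 1 (pd 0 ψ)) x = pd 1 (pd 0 (pd 0 ψ)) x := pd_comm (pd_contDiff hψ 0) 0 1 x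
  have s3 : pd 0 (pd 1 u) x = pd 1 (pd 0 u) x := pd_comm hu 0 1 x
  rw [s1, s2, s3]
  ring



lemma hcs_pow {f : E2 → ℝ} (hfc : HasCompactSupport f) (n : ℕ) (hn : n ≠ 0) :
    HasCompactSupport (fun x => f x ^ n) :=
  hfc.comp_left (g := fun t : ℝ => t ^ n) (by simp [zero_pow hn])

lemma holder3 {f g h : E2 → ℝ} (hf : Continuous f) (hfc : HasCompactSupport f) (hf0 : ∀ x, 0 ≤ f x)
    (hg : Continuous g) (hgc : HasCompactSupport g) (hg0 : ∀ x, 0 ≤ g x)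
    (hh : Continuous h) (hhc : HasCompactSupport h) (hh0 : ∀ x, 0 ≤ h x) :
    ∫ x, f x * g x * h x ≤ (∫ x, f x ^ 4) ^ ((1:ℝ)/4) * (∫ x, g x ^ 2) ^ ((1:ℝ)/2)
      * (∫ x, h x ^ 4) ^ ((1:ℝ)/4) := by
  have if4 : Integrable (fun x => f x ^ 4) (volume : Measure E2) :=
    (hf.pow 4).integrable_of_hasCompactSupport (hcs_pow hfc 4 (by norm_num))
  have ig2 : Integrable (fun x => g x ^ 2) (volume : Measure E2) :=
    (hg.pow 2).integrable_of_hasCompactSupport (hcs_pow hgc 2 (by norm_num))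
  have ih4 : Integrable (fun x => h x ^ 4) (volume : Measure E2) :=
    (hh.pow 4).integrable_of_hasCompactSupport (hcs_pow hhc 4 (by norm_num))
  set F := fun x => ENNReal.ofReal (f x) with hF
  set G := fun x => ENNReal.ofReal (g x) with hG
  set H := fun x => ENNReal.ofReal (h x) with hH
  have hmeas : ∀ i ∈ (Finset.univ : Finset (Fin 3)),
      AEMeasurable (![fun x => F x ^ (4:ℝ), fun x => G x ^ (2:ℝ), fun x => H x ^ (4:ℝ)] i)
        (volume : Measure E2) := by
    intro i _
    fin_cases i
    · exact (ENNReal.continuous_rpow_const.comp (ENNReal.continuous_ofReal.comp hf)).aemeasurable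
    · exact (ENNReal.continuous_rpow_const.comp (ENNReal.continuous_ofReal.comp hg)).aemeasurable
    · exact (ENNReal.continuous_rpow_const.comp (ENNReal.continuous_ofReal.comp hh)).aemeasurable
  have L := ENNReal.lintegral_prod_norm_pow_le (μ := (volume : Measure E2)) Finset.univ hmeas
      (p := ![(1:ℝ)/4, 1/2, 1/4]) (by simp [Fin.sum_univ_three]; norm_num)
      (by intro i _; fin_cases i <;> norm_num)
  simp only [Fin.prod_univ_three, Matrix.cons_val_zero, Matrix.cons_val_one, Matrix.head_cons,
    Matrix.cons_val_two, Matrix.tail_cons] at L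
  have key : ∀ (x : ℝ≥0∞), (x ^ (4:ℝ)) ^ ((1:ℝ)/4) = x := by
    intro x
    rw [← ENNReal.rpow_mul]; norm_num
  have key2 : ∀ (x : ℝ≥0∞), (x ^ (2:ℝ)) ^ ((1:ℝ)/2) = x := by
    intro x; rw [← ENNReal.rpow_mul]; norm_num
  simp only [key, key2] at L
  have e1 : ∫⁻ x, F x ^ (4:ℝ) = ENNReal.ofReal (∫ x, f x ^ 4) := by
    rw [ofReal_integral_eq_lintegral_ofReal if4
      (Filter.Eventually.of_forall fun x => pow_nonneg (hf0 x) 4)]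
    refine lintegral_congr fun x => ?_
    rw [hF, ENNReal.ofReal_rpow_of_nonneg (hf0 x) (by norm_num)]
    rw [show ((4:ℝ)) = ((4:ℕ):ℝ) by norm_num, Real.rpow_natCast]
  have e2 : ∫⁻ x, G x ^ (2:ℝ) = ENNReal.ofReal (∫ x, g x ^ 2) := by
    rw [ofReal_integral_eq_lintegral_ofReal ig2
      (Filter.Eventually.of_forall fun x => pow_nonneg (hg0 x) 2)]
    refine lintegral_congr fun x => ?_
    rw [hG, ENNReal.ofReal_rpow_of_nonneg (hg0 x) (by norm_num),
      show ((2:ℝ)) = ((2:ℕ):ℝ) by norm_num, Real.rpow_natCast]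
  have e3 : ∫⁻ x, H x ^ (4:ℝ) = ENNReal.ofReal (∫ x, h x ^ 4) := by
    rw [ofReal_integral_eq_lintegral_ofReal ih4
      (Filter.Eventually.of_forall fun x => pow_nonneg (hh0 x) 4)]
    refine lintegral_congr fun x => ?_
    rw [hH, ENNReal.ofReal_rpow_of_nonneg (hh0 x) (by norm_num)]
    rw [show ((4:ℝ)) = ((4:ℕ):ℝ) by norm_num, Real.rpow_natCast]
  rw [e1, e2, e3] at L
  have hA0 : 0 ≤ ∫ x, f x ^ 4 := integral_nonneg fun x => pow_nonneg (hf0 x) 4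
  have hB0 : 0 ≤ ∫ x, g x ^ 2 := integral_nonneg fun x => pow_nonneg (hg0 x) 2
  have hC0 : 0 ≤ ∫ x, h x ^ 4 := integral_nonneg fun x => pow_nonneg (hh0 x) 4
  have lhs_eq : ∫ x, f x * g x * h x
      = (∫⁻ x, F x * G x * H x).toReal := by
    rw [integral_eq_lintegral_of_nonneg_ae
      (Filter.Eventually.of_forall fun x => mul_nonneg (mul_nonneg (hf0 x) (hg0 x)) (hh0 x))
      ((hf.mul hg |>.mul hh).aestronglyMeasurable)]
    congr 1
    refine lintegral_congr fun x => ?_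
    rw [ENNReal.ofReal_mul (mul_nonneg (hf0 x) (hg0 x)), ENNReal.ofReal_mul (hf0 x)]
  have ne_top : ENNReal.ofReal (∫ x, f x ^ 4) ^ ((1:ℝ)/4)
      * ENNReal.ofReal (∫ x, g x ^ 2) ^ ((1:ℝ)/2)
      * ENNReal.ofReal (∫ x, h x ^ 4) ^ ((1:ℝ)/4) ≠ ⊤ := by
    apply ENNReal.mul_ne_top (ENNReal.mul_ne_top ?_ ?_) ?_ <;>
      exact ENNReal.rpow_ne_top_of_nonneg (by norm_num) ENNReal.ofReal_ne_top
  calc ∫ x, f x * g x * h x = (∫⁻ x, F x * G x * H x).toReal := lhs_eq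
    _ ≤ (ENNReal.ofReal (∫ x, f x ^ 4) ^ ((1:ℝ)/4)
          * ENNReal.ofReal (∫ x, g x ^ 2) ^ ((1:ℝ)/2)
          * ENNReal.ofReal (∫ x, h x ^ 4) ^ ((1:ℝ)/4)).toReal := ENNReal.toReal_mono ne_top L
    _ = (∫ x, f x ^ 4) ^ ((1:ℝ)/4) * (∫ x, g x ^ 2) ^ ((1:ℝ)/2)
          * (∫ x, h x ^ 4) ^ ((1:ℝ)/4) := by
        rw [ENNReal.toReal_mul, ENNReal.toReal_mul, ← ENNReal.toReal_rpow, ← ENNReal.toReal_rpow,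
          ← ENNReal.toReal_rpow, ENNReal.toReal_ofReal hA0, ENNReal.toReal_ofReal hB0,
          ENNReal.toReal_ofReal hC0]


lemma cs2 (a b c d : ℝ) : |a*c + b*d| ≤ Real.sqrt (a^2+b^2) * Real.sqrt (c^2+d^2) := by
  rw [← Real.sqrt_mul (by positivity)]
  rw [show |a*c+b*d| = Real.sqrt ((a*c+b*d)^2) by rw [Real.sqrt_sq_eq_abs]]
  apply Real.sqrt_le_sqrt
  nlinarith [sq_nonneg (a*d - b*c)]

lemma mink2 (a b c d : ℝ) :
    Real.sqrt ((a+c)^2+(b+d)^2) ≤ Real.sqrt (a^2+b^2) + Real.sqrt (c^2+d^2) := by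
  have h1 : a*c + b*d ≤ Real.sqrt (a^2+b^2) * Real.sqrt (c^2+d^2) :=
    (le_abs_self _).trans (cs2 a b c d)
  have h2 := Real.sq_sqrt (show (0:ℝ) ≤ a^2+b^2 by positivity)
  have h3 := Real.sq_sqrt (show (0:ℝ) ≤ c^2+d^2 by positivity)
  have h4 := Real.sqrt_nonneg (a^2+b^2)
  have h5 := Real.sqrt_nonneg (c^2+d^2)
  rw [show Real.sqrt (a^2+b^2) + Real.sqrt (c^2+d^2)
    = Real.sqrt ((Real.sqrt (a^2+b^2) + Real.sqrt (c^2+d^2))^2) by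
      rw [Real.sqrt_sq (by positivity)]]
  apply Real.sqrt_le_sqrt
  nlinarith

lemma vbd (u0 u1 A B C : ℝ) :
    Real.sqrt ((u0*A - u1*B)^2 + (u1*C - u0*B)^2)
      ≤ Real.sqrt (u0^2+u1^2) * Real.sqrt (C^2 + B^2 + B^2 + A^2) := by
  rw [← Real.sqrt_mul (by positivity)]
  apply Real.sqrt_le_sqrt
  nlinarith [sq_nonneg (u0*B + u1*A), sq_nonneg (u1*B + u0*C)]


lemma hcs_binop {f g : E2 → ℝ} (hf : HasCompactSupport f) (hg : HasCompactSupport g)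
    (op : ℝ → ℝ → ℝ) (h0 : op 0 0 = 0) : HasCompactSupport (fun y => op (f y) (g y)) :=
  HasCompactSupport.intro (hf.union hg) fun x hx => by
    rw [image_eq_zero_of_notMem_tsupport fun h => hx (Set.mem_union_left _ h),
        image_eq_zero_of_notMem_tsupport fun h => hx (Set.mem_union_right _ h), h0]

lemma hcs_mul_right {f g : E2 → ℝ} (hf : HasCompactSupport f) :
    HasCompactSupport (fun y => f y * g y) :=
  HasCompactSupport.intro hf fun x hx => by
    rw [image_eq_zero_of_notMem_tsupport hx, zero_mul]

lemma hcs_sub {f g : E2 → ℝ} (hf : HasCompactSupport f) (hg : HasCompactSupport g) :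
    HasCompactSupport (fun y => f y - g y) := hcs_binop hf hg (· - ·) (by norm_num)

lemma hcs_add {f g : E2 → ℝ} (hf : HasCompactSupport f) (hg : HasCompactSupport g) :
    HasCompactSupport (fun y => f y + g y) := hcs_binop hf hg (· + ·) (by norm_num)

lemma gradNorm_cont {g : E2 → ℝ} (hg : ContDiff ℝ (⊤ : ℕ∞) g) : Continuous (gradNorm g) :=
  (((pd_cont hg 0).pow 2).add ((pd_cont hg 1).pow 2)).sqrt

lemma gradNorm_hcs {g : E2 → ℝ} (hgc : HasCompactSupport g) : HasCompactSupport (gradNorm g) := by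
  have h : HasCompactSupport (fun x => (pd 0 g x) ^ 2 + (pd 1 g x) ^ 2) :=
    hcs_add (hcs_pow (pd_hcs hgc 0) 2 (by norm_num)) (hcs_pow (pd_hcs hgc 1) 2 (by norm_num))
  exact h.comp_left (g := Real.sqrt) Real.sqrt_zero

lemma hessNorm_cont {g : E2 → ℝ} (hg : ContDiff ℝ (⊤ : ℕ∞) g) : Continuous (hessNorm g) := by
  have c : ∀ i j : Fin 2, Continuous (fun x => (pd i (pd j g) x) ^ 2) := fun i j =>
    (pd_cont (pd_contDiff hg j) i).pow 2
  exact ((((c 0 0).add (c 1 0)).add (c 0 1)).add (c 1 1)).sqrt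

lemma hessNorm_hcs {g : E2 → ℝ} (hgc : HasCompactSupport g) : HasCompactSupport (hessNorm g) := by
  have c : ∀ i j : Fin 2, HasCompactSupport (fun x => (pd i (pd j g) x) ^ 2) := fun i j =>
    hcs_pow (pd_hcs (pd_hcs hgc j) i) 2 (by norm_num)
  have h : HasCompactSupport (fun x => (pd 0 (pd 0 g) x) ^ 2 + (pd 1 (pd 0 g) x) ^ 2
      + (pd 0 (pd 1 g) x) ^ 2 + (pd 1 (pd 1 g) x) ^ 2) :=
    hcs_add (hcs_add (hcs_add (c 0 0) (c 1 0)) (c 0 1)) (c 1 1)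
  exact h.comp_left (g := Real.sqrt) Real.sqrt_zero

theorem stmt13 (φ₁ φ₂ w : EuclideanSpace ℝ (Fin 2) → ℝ)
    (hφ₁ : ContDiff ℝ (⊤ : ℕ∞) φ₁) (hφ₁c : HasCompactSupport φ₁)
    (hφ₂ : ContDiff ℝ (⊤ : ℕ∞) φ₂) (hφ₂c : HasCompactSupport φ₂)
    (hw : ContDiff ℝ (⊤ : ℕ∞) w) (hwc : HasCompactSupport w) :
    |∫ x, (hessDet φ₁ x - hessDet φ₂ x) * w x| ≤
      ((∫ x, (gradNorm φ₁ x) ^ 4) ^ ((1 : ℝ) / 4)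
          + (∫ x, (gradNorm φ₂ x) ^ 4) ^ ((1 : ℝ) / 4))
        * (∫ x, (hessNorm (fun y => φ₁ y - φ₂ y) x) ^ 2) ^ ((1 : ℝ) / 2)
        * (∫ x, (gradNorm w x) ^ 4) ^ ((1 : ℝ) / 4) := by
  have dφ₁ : Differentiable ℝ φ₁ := hφ₁.differentiable (by simp)
  have dφ₂ : Differentiable ℝ φ₂ := hφ₂.differentiable (by simp)
  set u : E2 → ℝ := fun y => φ₁ y + φ₂ y with hu_def
  set ψ : E2 → ℝ := fun y => φ₁ y - φ₂ y with hψ_def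
  have hu : ContDiff ℝ (⊤ : ℕ∞) u := hφ₁.add hφ₂
  have hψ : ContDiff ℝ (⊤ : ℕ∞) ψ := hφ₁.sub hφ₂
  have huc : HasCompactSupport u := hcs_add hφ₁c hφ₂c
  have hψc : HasCompactSupport ψ := hcs_sub hφ₁c hφ₂c
  -- smoothness and compact support of V₁ * w and V₂ * w
  have sV₁ : ContDiff ℝ (⊤ : ℕ∞) (fun y => pd 0 u y * pd 1 (pd 1 ψ) y - pd 1 u y * pd 1 (pd 0 ψ) y) :=
    ((pd_contDiff hu 0).mul (pd_contDiff (pd_contDiff hψ 1) 1)).sub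
      ((pd_contDiff hu 1).mul (pd_contDiff (pd_contDiff hψ 0) 1))
  have sV₂ : ContDiff ℝ (⊤ : ℕ∞) (fun y => pd 1 u y * pd 0 (pd 0 ψ) y - pd 0 u y * pd 1 (pd 0 ψ) y) :=
    ((pd_contDiff hu 1).mul (pd_contDiff (pd_contDiff hψ 0) 0)).sub
      ((pd_contDiff hu 0).mul (pd_contDiff (pd_contDiff hψ 0) 1))
  have csV₁ : HasCompactSupport (fun y => pd 0 u y * pd 1 (pd 1 ψ) y - pd 1 u y * pd 1 (pd 0 ψ) y) :=
    hcs_sub (hcs_mul_right (pd_hcs huc 0)) (hcs_mul_right (pd_hcs huc 1))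
  have csV₂ : HasCompactSupport (fun y => pd 1 u y * pd 0 (pd 0 ψ) y - pd 0 u y * pd 1 (pd 0 ψ) y) :=
    hcs_sub (hcs_mul_right (pd_hcs huc 1)) (hcs_mul_right (pd_hcs huc 0))
  have sW₁ : ContDiff ℝ (⊤ : ℕ∞) (fun y => (pd 0 u y * pd 1 (pd 1 ψ) y - pd 1 u y * pd 1 (pd 0 ψ) y) * w y) :=
    sV₁.mul hw
  have sW₂ : ContDiff ℝ (⊤ : ℕ∞) (fun y => (pd 1 u y * pd 0 (pd 0 ψ) y - pd 0 u y * pd 1 (pd 0 ψ) y) * w y) :=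
    sV₂.mul hw
  have csW₁ : HasCompactSupport (fun y => (pd 0 u y * pd 1 (pd 1 ψ) y - pd 1 u y * pd 1 (pd 0 ψ) y) * w y) :=
    hcs_mul_right csV₁
  have csW₂ : HasCompactSupport (fun y => (pd 1 u y * pd 0 (pd 0 ψ) y - pd 0 u y * pd 1 (pd 0 ψ) y) * w y) :=
    hcs_mul_right csV₂
  have hz1 : ∫ x, pd 0 (fun y => (pd 0 u y * pd 1 (pd 1 ψ) y - pd 1 u y * pd 1 (pd 0 ψ) y) * w y) x = 0 :=
    integral_pd_eq_zero sW₁ csW₁ 0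
  have hz2 : ∫ x, pd 1 (fun y => (pd 1 u y * pd 0 (pd 0 ψ) y - pd 0 u y * pd 1 (pd 0 ψ) y) * w y) x = 0 :=
    integral_pd_eq_zero sW₂ csW₂ 1
  -- the expression of the difference of Hessian determinants
  have dd_eq : ∀ x, hessDet φ₁ x - hessDet φ₂ x
      = (1/2) * (pd 0 (pd 0 u) x * pd 1 (pd 1 ψ) x + pd 1 (pd 1 u) x * pd 0 (pd 0 ψ) x
        - 2 * pd 1 (pd 0 u) x * pd 1 (pd 0 ψ) x) := by
    intro x
    have hu2 : ∀ i j : Fin 2, pd i (pd j u) x = pd i (pd j φ₁) x + pd i (pd j φ₂) x := by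
      intro i j
      have h1 : pd j u = fun y => pd j φ₁ y + pd j φ₂ y := funext fun y => by
        rw [hu_def]; exact pd_add dφ₁ dφ₂ j y
      rw [h1, pd_add ((pd_contDiff hφ₁ j).differentiable (by simp))
        ((pd_contDiff hφ₂ j).differentiable (by simp))]
    have hψ2 : ∀ i j : Fin 2, pd i (pd j ψ) x = pd i (pd j φ₁) x - pd i (pd j φ₂) x := by
      intro i j
      have h1 : pd j ψ = fun y => pd j φ₁ y - pd j φ₂ y := funext fun y => by
        rw [hψ_def]; exact pd_sub dφ₁ dφ₂ j y
      rw [h1, pd_sub ((pd_contDiff hφ₁ j).differentiable (by simp))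
        ((pd_contDiff hφ₂ j).differentiable (by simp))]
    simp only [hessDet, hu2, hψ2]; ring
  have hpt : ∀ x, (hessDet φ₁ x - hessDet φ₂ x) * w x
      = (1/2) * pd 0 (fun y => (pd 0 u y * pd 1 (pd 1 ψ) y - pd 1 u y * pd 1 (pd 0 ψ) y) * w y) x
        + (1/2) * pd 1 (fun y => (pd 1 u y * pd 0 (pd 0 ψ) y - pd 0 u y * pd 1 (pd 0 ψ) y) * w y) x
        - (1/2) * ((pd 0 u x * pd 1 (pd 1 ψ) x - pd 1 u x * pd 1 (pd 0 ψ) x) * pd 0 w x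
          + (pd 1 u x * pd 0 (pd 0 ψ) x - pd 0 u x * pd 1 (pd 0 ψ) x) * pd 1 w x) := by
    intro x
    have hdiv := divergence_identity hu hψ hw x
    rw [dd_eq x]
    linarith [hdiv]
  -- integrability facts
  have i1 : Integrable (fun x => pd 0 (fun y => (pd 0 u y * pd 1 (pd 1 ψ) y
      - pd 1 u y * pd 1 (pd 0 ψ) y) * w y) x) (volume : Measure E2) :=
    (pd_cont sW₁ 0).integrable_of_hasCompactSupport (pd_hcs csW₁ 0)
  have i2 : Integrable (fun x => pd 1 (fun y => (pd 1 u y * pd 0 (pd 0 ψ) y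
      - pd 0 u y * pd 1 (pd 0 ψ) y) * w y) x) (volume : Measure E2) :=
    (pd_cont sW₂ 1).integrable_of_hasCompactSupport (pd_hcs csW₂ 1)
  have contG : Continuous (fun x => (pd 0 u x * pd 1 (pd 1 ψ) x - pd 1 u x * pd 1 (pd 0 ψ) x) * pd 0 w x
      + (pd 1 u x * pd 0 (pd 0 ψ) x - pd 0 u x * pd 1 (pd 0 ψ) x) * pd 1 w x) :=
    ((sV₁.continuous).mul (pd_cont hw 0)).add ((sV₂.continuous).mul (pd_cont hw 1))
  have csG : HasCompactSupport (fun x => (pd 0 u x * pd 1 (pd 1 ψ) x - pd 1 u x * pd 1 (pd 0 ψ) x) * pd 0 w x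
      + (pd 1 u x * pd 0 (pd 0 ψ) x - pd 0 u x * pd 1 (pd 0 ψ) x) * pd 1 w x) :=
    hcs_add (hcs_mul_right csV₁) (hcs_mul_right csV₂)
  have iG : Integrable (fun x => (pd 0 u x * pd 1 (pd 1 ψ) x - pd 1 u x * pd 1 (pd 0 ψ) x) * pd 0 w x
      + (pd 1 u x * pd 0 (pd 0 ψ) x - pd 0 u x * pd 1 (pd 0 ψ) x) * pd 1 w x) (volume : Measure E2) :=
    contG.integrable_of_hasCompactSupport csG
  have int_eq : ∫ x, (hessDet φ₁ x - hessDet φ₂ x) * w x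
      = -(1/2) * ∫ x, ((pd 0 u x * pd 1 (pd 1 ψ) x - pd 1 u x * pd 1 (pd 0 ψ) x) * pd 0 w x
        + (pd 1 u x * pd 0 (pd 0 ψ) x - pd 0 u x * pd 1 (pd 0 ψ) x) * pd 1 w x) := by
    rw [integral_congr_ae (Filter.Eventually.of_forall hpt)]
    have i1' : Integrable (fun a => (1:ℝ)/2 * pd 0 (fun y => (pd 0 u y * pd 1 (pd 1 ψ) y
        - pd 1 u y * pd 1 (pd 0 ψ) y) * w y) a) (volume : Measure E2) := i1.const_mul _
    have i2' : Integrable (fun a => (1:ℝ)/2 * pd 1 (fun y => (pd 1 u y * pd 0 (pd 0 ψ) y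
        - pd 0 u y * pd 1 (pd 0 ψ) y) * w y) a) (volume : Measure E2) := i2.const_mul _
    have iP : Integrable (fun a => (1:ℝ)/2 * pd 0 (fun y => (pd 0 u y * pd 1 (pd 1 ψ) y
        - pd 1 u y * pd 1 (pd 0 ψ) y) * w y) a + (1:ℝ)/2 * pd 1 (fun y => (pd 1 u y * pd 0 (pd 0 ψ) y
        - pd 0 u y * pd 1 (pd 0 ψ) y) * w y) a) (volume : Measure E2) := i1'.add i2'
    rw [integral_sub iP (iG.const_mul _), integral_add i1' i2',
      integral_const_mul, integral_const_mul, integral_const_mul, hz1, hz2]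
    ring
  -- pointwise bound
  have habs : ∀ x, |(pd 0 u x * pd 1 (pd 1 ψ) x - pd 1 u x * pd 1 (pd 0 ψ) x) * pd 0 w x
      + (pd 1 u x * pd 0 (pd 0 ψ) x - pd 0 u x * pd 1 (pd 0 ψ) x) * pd 1 w x|
      ≤ (gradNorm φ₁ x + gradNorm φ₂ x) * hessNorm ψ x * gradNorm w x := by
    intro x
    have hhess : hessNorm ψ x = Real.sqrt (pd 0 (pd 0 ψ) x ^ 2 + pd 1 (pd 0 ψ) x ^ 2
        + pd 1 (pd 0 ψ) x ^ 2 + pd 1 (pd 1 ψ) x ^ 2) := by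
      simp only [hessNorm, pd_comm hψ 0 1 x]
    have hgw : gradNorm w x = Real.sqrt ((pd 0 w x) ^ 2 + (pd 1 w x) ^ 2) := rfl
    have hgradu : Real.sqrt (pd 0 u x ^ 2 + pd 1 u x ^ 2) ≤ gradNorm φ₁ x + gradNorm φ₂ x := by
      have h0 : pd 0 u x = pd 0 φ₁ x + pd 0 φ₂ x := by rw [hu_def]; exact pd_add dφ₁ dφ₂ 0 x
      have h1 : pd 1 u x = pd 1 φ₁ x + pd 1 φ₂ x := by rw [hu_def]; exact pd_add dφ₁ dφ₂ 1 x
      rw [h0, h1]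
      simpa [gradNorm] using mink2 (pd 0 φ₁ x) (pd 1 φ₁ x) (pd 0 φ₂ x) (pd 1 φ₂ x)
    calc |(pd 0 u x * pd 1 (pd 1 ψ) x - pd 1 u x * pd 1 (pd 0 ψ) x) * pd 0 w x
        + (pd 1 u x * pd 0 (pd 0 ψ) x - pd 0 u x * pd 1 (pd 0 ψ) x) * pd 1 w x|
        ≤ Real.sqrt ((pd 0 u x * pd 1 (pd 1 ψ) x - pd 1 u x * pd 1 (pd 0 ψ) x) ^ 2
            + (pd 1 u x * pd 0 (pd 0 ψ) x - pd 0 u x * pd 1 (pd 0 ψ) x) ^ 2)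
          * Real.sqrt ((pd 0 w x) ^ 2 + (pd 1 w x) ^ 2) := cs2 _ _ _ _
      _ ≤ (Real.sqrt (pd 0 u x ^ 2 + pd 1 u x ^ 2)
            * Real.sqrt (pd 0 (pd 0 ψ) x ^ 2 + pd 1 (pd 0 ψ) x ^ 2
              + pd 1 (pd 0 ψ) x ^ 2 + pd 1 (pd 1 ψ) x ^ 2))
          * Real.sqrt ((pd 0 w x) ^ 2 + (pd 1 w x) ^ 2) :=
        mul_le_mul_of_nonneg_right
          (vbd (pd 0 u x) (pd 1 u x) (pd 1 (pd 1 ψ) x) (pd 1 (pd 0 ψ) x) (pd 0 (pd 0 ψ) x))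
          (Real.sqrt_nonneg _)
      _ ≤ ((gradNorm φ₁ x + gradNorm φ₂ x) * hessNorm ψ x) * gradNorm w x := by
        rw [hhess, hgw]
        exact mul_le_mul_of_nonneg_right
          (mul_le_mul_of_nonneg_right hgradu (Real.sqrt_nonneg _)) (Real.sqrt_nonneg _)
      _ = (gradNorm φ₁ x + gradNorm φ₂ x) * hessNorm ψ x * gradNorm w x := by ring
  -- integrability of the bounding functions
  have ib1 : Integrable (fun x => gradNorm φ₁ x * hessNorm ψ x * gradNorm w x) (volume : Measure E2) :=
    (((gradNorm_cont hφ₁).mul (hessNorm_cont hψ)).mul (gradNorm_cont hw)).integrable_of_hasCompactSupport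
      (hcs_mul_right (hcs_mul_right (gradNorm_hcs hφ₁c)))
  have ib2 : Integrable (fun x => gradNorm φ₂ x * hessNorm ψ x * gradNorm w x) (volume : Measure E2) :=
    (((gradNorm_cont hφ₂).mul (hessNorm_cont hψ)).mul (gradNorm_cont hw)).integrable_of_hasCompactSupport
      (hcs_mul_right (hcs_mul_right (gradNorm_hcs hφ₂c)))
  have ibound : Integrable (fun x => (gradNorm φ₁ x + gradNorm φ₂ x) * hessNorm ψ x * gradNorm w x)
      (volume : Measure E2) := by
    have : (fun x => (gradNorm φ₁ x + gradNorm φ₂ x) * hessNorm ψ x * gradNorm w x)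
        = fun x => gradNorm φ₁ x * hessNorm ψ x * gradNorm w x
          + gradNorm φ₂ x * hessNorm ψ x * gradNorm w x := funext fun x => by ring
    rw [this]; exact ib1.add ib2
  -- Hölder estimates
  have hold1 := holder3 (gradNorm_cont hφ₁) (gradNorm_hcs hφ₁c) (fun x => Real.sqrt_nonneg _)
    (hessNorm_cont hψ) (hessNorm_hcs hψc) (fun x => Real.sqrt_nonneg _)
    (gradNorm_cont hw) (gradNorm_hcs hwc) (fun x => Real.sqrt_nonneg _)
  have hold2 := holder3 (gradNorm_cont hφ₂) (gradNorm_hcs hφ₂c) (fun x => Real.sqrt_nonneg _)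
    (hessNorm_cont hψ) (hessNorm_hcs hψc) (fun x => Real.sqrt_nonneg _)
    (gradNorm_cont hw) (gradNorm_hcs hwc) (fun x => Real.sqrt_nonneg _)
  have hT1 : (0:ℝ) ≤ (∫ x, (gradNorm φ₁ x) ^ 4) ^ ((1:ℝ)/4) :=
    Real.rpow_nonneg (integral_nonneg fun x => by positivity) _
  have hT2 : (0:ℝ) ≤ (∫ x, (gradNorm φ₂ x) ^ 4) ^ ((1:ℝ)/4) :=
    Real.rpow_nonneg (integral_nonneg fun x => by positivity) _
  have hS : (0:ℝ) ≤ (∫ x, (hessNorm ψ x) ^ 2) ^ ((1:ℝ)/2) :=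
    Real.rpow_nonneg (integral_nonneg fun x => by positivity) _
  have hW : (0:ℝ) ≤ (∫ x, (gradNorm w x) ^ 4) ^ ((1:ℝ)/4) :=
    Real.rpow_nonneg (integral_nonneg fun x => by positivity) _
  calc |∫ x, (hessDet φ₁ x - hessDet φ₂ x) * w x|
      = (1/2) * |∫ x, ((pd 0 u x * pd 1 (pd 1 ψ) x - pd 1 u x * pd 1 (pd 0 ψ) x) * pd 0 w x
        + (pd 1 u x * pd 0 (pd 0 ψ) x - pd 0 u x * pd 1 (pd 0 ψ) x) * pd 1 w x)| := by
        rw [int_eq, abs_mul]; norm_num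
    _ ≤ (1/2) * ∫ x, |(pd 0 u x * pd 1 (pd 1 ψ) x - pd 1 u x * pd 1 (pd 0 ψ) x) * pd 0 w x
        + (pd 1 u x * pd 0 (pd 0 ψ) x - pd 0 u x * pd 1 (pd 0 ψ) x) * pd 1 w x| := by
        have := norm_integral_le_integral_norm (μ := (volume : Measure E2))
          (fun x => (pd 0 u x * pd 1 (pd 1 ψ) x - pd 1 u x * pd 1 (pd 0 ψ) x) * pd 0 w x
            + (pd 1 u x * pd 0 (pd 0 ψ) x - pd 0 u x * pd 1 (pd 0 ψ) x) * pd 1 w x)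
        simp only [Real.norm_eq_abs] at this
        linarith
    _ ≤ (1/2) * ∫ x, (gradNorm φ₁ x + gradNorm φ₂ x) * hessNorm ψ x * gradNorm w x := by
        have := integral_mono iG.abs ibound habs
        linarith
    _ = (1/2) * ((∫ x, gradNorm φ₁ x * hessNorm ψ x * gradNorm w x)
        + ∫ x, gradNorm φ₂ x * hessNorm ψ x * gradNorm w x) := by
        rw [← integral_add ib1 ib2]
        congr 1
        exact integral_congr_ae (Filter.Eventually.of_forall fun x => by ring)
    _ ≤ (1/2) * (((∫ x, (gradNorm φ₁ x) ^ 4) ^ ((1:ℝ)/4) * (∫ x, (hessNorm ψ x) ^ 2) ^ ((1:ℝ)/2)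
          * (∫ x, (gradNorm w x) ^ 4) ^ ((1:ℝ)/4))
        + ((∫ x, (gradNorm φ₂ x) ^ 4) ^ ((1:ℝ)/4) * (∫ x, (hessNorm ψ x) ^ 2) ^ ((1:ℝ)/2)
          * (∫ x, (gradNorm w x) ^ 4) ^ ((1:ℝ)/4))) := by
        have := add_le_add hold1 hold2
        linarith
    _ ≤ ((∫ x, (gradNorm φ₁ x) ^ 4) ^ ((1:ℝ)/4) + (∫ x, (gradNorm φ₂ x) ^ 4) ^ ((1:ℝ)/4))
        * (∫ x, (hessNorm ψ x) ^ 2) ^ ((1:ℝ)/2) * (∫ x, (gradNorm w x) ^ 4) ^ ((1:ℝ)/4) := by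
        nlinarith [mul_nonneg (mul_nonneg (add_nonneg hT1 hT2) hS) hW]
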